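/- Let α, β, γ ∈ ℝ, and let (x₀, y₀), (x₁, y₁) be points on y²x = α + βx + γx² with x₀, x₁ ≠ 0, x₁ ≠ x₀, and α ≠ γx₀x₁. Define s_P := −x₀(y₁ − y₀)/(x₁ − x₀) and s_P̄ := x₀(y₁ + y₀)γx₁/(α − γx₁x₀). Then s_P · s_P̄ = γ·x₀. -/

import Mathlib

/-!
Subtracting the curve equations at the two points, weighted by `x₁` and `x₀`, cancels the
`β`-term and factors as `x₀ x₁ (y₁ - y₀)(y₁ + y₀) = (x₁ - x₀)(γ x₀ x₁ - α)`. The denominators of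
`s_P` and `s_P̄` are exactly the two factors on the right, so the product collapses to `γ x₀`.
-/

theorem mul_sub_mul_add_eq_of_curve {R : Type*} [CommRing R] {α β γ x₀ y₀ x₁ y₁ : R}
    (h0 : y₀ ^ 2 * x₀ = α + β * x₀ + γ * x₀ ^ 2)
    (h1 : y₁ ^ 2 * x₁ = α + β * x₁ + γ * x₁ ^ 2) :
    x₀ * x₁ * (y₁ - y₀) * (y₁ + y₀) = (x₁ - x₀) * (γ * x₀ * x₁ - α) := by
  linear_combination x₀ * h1 - x₁ * h0

theorem stmt_10_general (α β γ x₀ y₀ x₁ y₁ : ℝ)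
    (h0 : y₀^2 * x₀ = α + β * x₀ + γ * x₀^2)
    (h1 : y₁^2 * x₁ = α + β * x₁ + γ * x₁^2)
    (hne : x₁ ≠ x₀) (hd : α ≠ γ * x₀ * x₁) :
    (-(x₀ * (y₁ - y₀)) / (x₁ - x₀)) * (x₀ * (y₁ + y₀) * γ * x₁ / (α - γ * x₁ * x₀))
      = γ * x₀ := by
  have hchord : x₁ - x₀ ≠ 0 := sub_ne_zero.mpr hne
  have hconj : α - γ * x₁ * x₀ ≠ 0 := fun h => hd (by linear_combination h)
  rw [div_mul_div_comm, div_eq_iff (mul_ne_zero hchord hconj)]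
  linear_combination (-(γ * x₀)) * mul_sub_mul_add_eq_of_curve h0 h1

theorem stmt_10 (α β γ x₀ y₀ x₁ y₁ : ℝ)
    (h0 : y₀^2 * x₀ = α + β * x₀ + γ * x₀^2)
    (h1 : y₁^2 * x₁ = α + β * x₁ + γ * x₁^2)
    (hx0 : x₀ ≠ 0) (hx1 : x₁ ≠ 0) (hne : x₁ ≠ x₀) (hd : α ≠ γ * x₀ * x₁) :
    (-(x₀ * (y₁ - y₀)) / (x₁ - x₀)) * (x₀ * (y₁ + y₀) * γ * x₁ / (α - γ * x₁ * x₀))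
      = γ * x₀ :=
  stmt_10_general α β γ x₀ y₀ x₁ y₁ h0 h1 hne hd
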